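/- Let X, Y be finite sets with probability measures and ω_X^t, ω_Y^t parameterized kernels over a common finite parameter space Ω with measure ν. If GW_C(X,Y) = 0 for the fixed-parameter cost structure with p,q∈[1,∞), then there exists a coupling π of (μ_X,μ_Y) such that ω_X^t(x,x') = ω_Y^t(y,y') for all t∈Ω with ν(t)>0 and all pairs (x,y),(x',y') in the support of π. Consequently, the pm-net Z=(X×Y, π, Ω, ν, ω_Z) with ω_Z^t((x,y),(x',y')) = ω_X^t(x,x') is a stabilization of X and Y via the coordinate projections. -/

import Mathlib

/-!
The infimum is attained: the couplings form a compact set (closed, and bounded by the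
marginals) on which the objective is continuous, so some coupling `π` has objective `0`.
Unfolding, this is a vanishing sum of nonnegative terms
`ν s * |ωX s x x' - ωY s y y'| ^ p * π x y * π x' y'` (up to powers), and for a parameter of
positive weight and two pairs in the support of `π` the weight in front is positive.
-/

open Finset

/-- Coupling predicate for finite probability vectors. -/
def IsCoupling {X Y : Type*} [Fintype X] [Fintype Y]
    (μX : X → ℝ) (μY : Y → ℝ) (π : X → Y → ℝ) : Prop :=
  (∀ x y, 0 ≤ π x y) ∧ (∀ x, ∑ y, π x y = μX x) ∧ (∀ y, ∑ x, π x y = μY y)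

/-- The `p`-distortion of a coupling with respect to two kernels. -/
noncomputable def dis {X Y : Type*} [Fintype X] [Fintype Y]
    (p : ℝ) (π : X → Y → ℝ) (f : X → X → ℝ) (g : Y → Y → ℝ) : ℝ :=
  (∑ x, ∑ y, ∑ x', ∑ y', |f x x' - g y y'| ^ p * (π x y * π x' y')) ^ (1 / p)

section Coupling

variable {X Y : Type*} [Fintype X] [Fintype Y] {μX : X → ℝ} {μY : Y → ℝ} {π : X → Y → ℝ}

theorem isCoupling_mul (hμX0 : ∀ x, 0 ≤ μX x) (hμX1 : ∑ x, μX x = 1)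
    (hμY0 : ∀ y, 0 ≤ μY y) (hμY1 : ∑ y, μY y = 1) :
    IsCoupling μX μY fun x y => μX x * μY y :=
  ⟨fun x y => mul_nonneg (hμX0 x) (hμY0 y),
    fun x => by rw [← mul_sum, hμY1, mul_one],
    fun y => by rw [← sum_mul, hμX1, one_mul]⟩

theorem IsCoupling.le_left (hπ : IsCoupling μX μY π) (x : X) (y : Y) : π x y ≤ μX x :=
  hπ.2.1 x ▸ single_le_sum (fun y' _ => hπ.1 x y') (mem_univ y)

theorem isClosed_setOf_isCoupling (μX : X → ℝ) (μY : Y → ℝ) :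
    IsClosed {π | IsCoupling μX μY π} := by
  simp only [IsCoupling, Set.ofPred_and, Set.ofPred_forall]
  have hnonneg : IsClosed (⋂ x, ⋂ y, {π : X → Y → ℝ | 0 ≤ π x y}) :=
    isClosed_iInter fun x => isClosed_iInter fun y => isClosed_le continuous_const (by fun_prop)
  have hleft : IsClosed (⋂ x, {π : X → Y → ℝ | ∑ y, π x y = μX x}) :=
    isClosed_iInter fun x => isClosed_eq (by fun_prop) continuous_const
  have hright : IsClosed (⋂ y, {π : X → Y → ℝ | ∑ x, π x y = μY y}) :=
    isClosed_iInter fun y => isClosed_eq (by fun_prop) continuous_const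
  exact hnonneg.inter (hleft.inter hright)

theorem isCompact_setOf_isCoupling (μX : X → ℝ) (μY : Y → ℝ) :
    IsCompact {π | IsCoupling μX μY π} :=
  (isCompact_univ_pi fun x => isCompact_univ_pi fun _ => isCompact_Icc (a := 0) (b := μX x)
    ).of_isClosed_subset (isClosed_setOf_isCoupling μX μY)
    fun _ hπ x _ y _ => ⟨hπ.1 x y, hπ.le_left x y⟩

end Coupling

section Distortion

variable {X Y : Type*} [Fintype X] [Fintype Y]

theorem continuous_dis {p : ℝ} (hp : 0 ≤ p) (f : X → X → ℝ) (g : Y → Y → ℝ) :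
    Continuous fun π : X → Y → ℝ => dis p π f g :=
  (Real.continuous_rpow_const (by positivity)).comp (by fun_prop)

theorem dis_nonneg (p : ℝ) {π : X → Y → ℝ} (hπ : ∀ x y, 0 ≤ π x y)
    (f : X → X → ℝ) (g : Y → Y → ℝ) : 0 ≤ dis p π f g :=
  Real.rpow_nonneg (sum_nonneg fun x _ => sum_nonneg fun y _ => sum_nonneg fun x' _ =>
    sum_nonneg fun y' _ => mul_nonneg (by positivity) (mul_nonneg (hπ x y) (hπ x' y'))) _

theorem eq_of_dis_eq_zero {p : ℝ} (hp : p ≠ 0) {π : X → Y → ℝ} (hπ : ∀ x y, 0 ≤ π x y)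
    {f : X → X → ℝ} {g : Y → Y → ℝ} (h : dis p π f g = 0) {x x' : X} {y y' : Y}
    (hxy : 0 < π x y) (hx'y' : 0 < π x' y') : f x x' = g y y' := by
  have hterm_nonneg : ∀ a b a' b', 0 ≤ |f a a' - g b b'| ^ p * (π a b * π a' b') :=
    fun a b a' b' => by have := hπ a b; have := hπ a' b'; positivity
  have hsum : ∑ z : X × Y × X × Y, |f z.1 z.2.2.1 - g z.2.1 z.2.2.2| ^ p *
      (π z.1 z.2.1 * π z.2.2.1 z.2.2.2) = 0 := by
    refine (Real.rpow_eq_zero (Fintype.sum_nonneg fun _ => hterm_nonneg ..)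
      (one_div_ne_zero hp)).1 ?_
    simpa only [dis, Fintype.sum_prod_type] using h
  have hterm := congrFun ((Fintype.sum_eq_zero_iff_of_nonneg fun _ => hterm_nonneg ..).1 hsum)
    (x, y, x', y')
  rw [Pi.zero_apply, mul_eq_zero, Real.rpow_eq_zero (abs_nonneg _) hp, abs_eq_zero,
    sub_eq_zero] at hterm
  exact hterm.resolve_right (mul_pos hxy hx'y').ne'

end Distortion

theorem eq_zero_of_weighted_rpow_sum_eq_zero {ι : Type*} [Fintype ι] {d ν : ι → ℝ} {q : ℝ}
    (hq : q ≠ 0) (hd : ∀ i, 0 ≤ d i) (hν : ∀ i, 0 ≤ ν i)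
    (h : (∑ i, d i ^ q * ν i) ^ (1 / q) = 0) {i : ι} (hi : 0 < ν i) : d i = 0 := by
  have hterm_nonneg : ∀ j, 0 ≤ d j ^ q * ν j := fun j => by have := hd j; have := hν j; positivity
  have hsum := (Real.rpow_eq_zero (sum_nonneg fun j _ => hterm_nonneg j) (one_div_ne_zero hq)).1 h
  have hterm := congrFun ((Fintype.sum_eq_zero_iff_of_nonneg hterm_nonneg).1 hsum) i
  rw [Pi.zero_apply, mul_eq_zero, Real.rpow_eq_zero (hd i) hq] at hterm
  exact hterm.resolve_right hi.ne'

theorem stabilization_of_parameterizedGW_eq_zero_general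
    {X Y Ω : Type*} [Fintype X] [Fintype Y] [Fintype Ω]
    (μX : X → ℝ) (μY : Y → ℝ) (ν : Ω → ℝ)
    (hμX0 : ∀ x, 0 ≤ μX x) (hμX1 : ∑ x, μX x = 1)
    (hμY0 : ∀ y, 0 ≤ μY y) (hμY1 : ∑ y, μY y = 1)
    (hν0 : ∀ s, 0 ≤ ν s)
    (ωX : Ω → X → X → ℝ) (ωY : Ω → Y → Y → ℝ)
    (p q : ℝ) (hp : 1 ≤ p) (hq : 1 ≤ q)
    (hzero : (1 / 2 : ℝ) * sInf {r : ℝ | ∃ π : X → Y → ℝ, IsCoupling μX μY π ∧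
      r = (∑ s, dis p π (ωX s) (ωY s) ^ q * ν s) ^ (1 / q)} = 0) :
    ∃ π : X → Y → ℝ, IsCoupling μX μY π ∧
      ∀ s, 0 < ν s → ∀ x y x' y', 0 < π x y → 0 < π x' y' →
        ωX s x x' = ωY s y y' := by
  set objective : (X → Y → ℝ) → ℝ := fun π => (∑ s, dis p π (ωX s) (ωY s) ^ q * ν s) ^ (1 / q)
  have hcont : Continuous objective :=
    (Real.continuous_rpow_const (by positivity)).comp <| continuous_finsetSum _ fun s _ =>
      ((Real.continuous_rpow_const (by positivity)).comp
        (continuous_dis (by positivity) _ _)).mul continuous_const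
  have hvalues : {r : ℝ | ∃ π, IsCoupling μX μY π ∧ r = objective π} =
      objective '' {π | IsCoupling μX μY π} :=
    Set.ext fun _ => exists_congr fun _ => and_congr_right' eq_comm
  have hattained := ((isCompact_setOf_isCoupling μX μY).image hcont).sInf_mem
    ((Set.nonempty_of_mem (s := {π | IsCoupling μX μY π})
      (isCoupling_mul hμX0 hμX1 hμY0 hμY1)).image objective)
  rw [← hvalues] at hattained
  obtain ⟨π, hπ, hπ0⟩ := hattained
  have hobjective : objective π = 0 := by rw [← hπ0]; linarith
  refine ⟨π, hπ, fun s hs x y x' y' hxy hx'y' => ?_⟩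
  have hdis := eq_zero_of_weighted_rpow_sum_eq_zero (by positivity)
    (fun s => dis_nonneg p hπ.1 (ωX s) (ωY s)) hν0 hobjective hs
  exact eq_of_dis_eq_zero (by positivity) hπ.1 hdis hxy hx'y'

/-- If the parameterized GW distance between two pm-nets over a common finite parameter
space vanishes, then there is a coupling `π` of the underlying measures along which the
kernels agree at every parameter of positive weight and on the support of `π`: this
exhibits `(X × Y, π, Ω, ν)` with the kernel pulled back along the first projection as a
stabilization of the two pm-nets. -/
theorem stabilization_of_parameterizedGW_eq_zero
    {X Y Ω : Type*} [Fintype X] [Fintype Y] [Fintype Ω]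
    (μX : X → ℝ) (μY : Y → ℝ) (ν : Ω → ℝ)
    (hμX0 : ∀ x, 0 ≤ μX x) (hμX1 : ∑ x, μX x = 1)
    (hμY0 : ∀ y, 0 ≤ μY y) (hμY1 : ∑ y, μY y = 1)
    (hν0 : ∀ s, 0 ≤ ν s) (hν1 : ∑ s, ν s = 1)
    (ωX : Ω → X → X → ℝ) (ωY : Ω → Y → Y → ℝ)
    (p q : ℝ) (hp : 1 ≤ p) (hq : 1 ≤ q)
    (hzero : (1 / 2 : ℝ) * sInf {r : ℝ | ∃ π : X → Y → ℝ, IsCoupling μX μY π ∧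
      r = (∑ s, dis p π (ωX s) (ωY s) ^ q * ν s) ^ (1 / q)} = 0) :
    ∃ π : X → Y → ℝ, IsCoupling μX μY π ∧
      ∀ s, 0 < ν s → ∀ x y x' y', 0 < π x y → 0 < π x' y' →
        ωX s x x' = ωY s y y' :=
  stabilization_of_parameterizedGW_eq_zero_general μX μY ν hμX0 hμX1 hμY0 hμY1 hν0 ωX ωY p q hp hq
    hzero
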